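/- There exists a universal constant c > 0 such that for all n ≥ 1, all ε with 1/n ≤ ε ≤ 1/2, and every nonempty subset A ⊆ L_mid with |A| = σ·2^n: E_{x uniform in A}[score↓(x,A)] ≥ c·ε⁸·σ·√n / √(ln(1/ε)). -/

import Mathlib

open Finset

/-- The Hamming weight `‖x‖₁` of `x ∈ {0,1}^n`. -/
def wt {n : ℕ} (x : Fin n → Bool) : ℕ :=
  (Finset.univ.filter (fun i => x i = true)).card

/-- The Hamming distance `‖x − y‖₁`. -/
def hamm {n : ℕ} (x y : Fin n → Bool) : ℕ :=
  (Finset.univ.filter (fun i => x i ≠ y i)).card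

/-- The parameter `d = d(n,ε) = 2⌈√(2n·ln(100/ε))⌉`. -/
noncomputable def dPar (n : ℕ) (ε : ℝ) : ℕ :=
  2 * ⌈Real.sqrt (2 * n * Real.log (100 / ε))⌉₊

open Classical in
/-- The middle layers `L_mid = {x : (n−d)/2 ≤ ‖x‖₁ ≤ (n+d)/2}`. -/
noncomputable def Lmid (n : ℕ) (ε : ℝ) : Finset (Fin n → Bool) :=
  Finset.univ.filter (fun x =>
    ((n : ℝ) - dPar n ε) / 2 ≤ (wt x : ℝ) ∧ (wt x : ℝ) ≤ ((n : ℝ) + dPar n ε) / 2)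

/-- The `j`-th point (from the bottom) of the path from `0^n` to `1^n` determined by the
permutation `π`: its ones are exactly in positions `π(0),…,π(j−1)`. -/
def pathPoint {n : ℕ} (π : Equiv.Perm (Fin n)) (j : ℕ) : Fin n → Bool :=
  fun i => decide ((π.symm i : ℕ) < j)

/-- The indices `j` of the points of the path `π` lying in the middle layers `L_mid`. -/
noncomputable def pmidIdx (n : ℕ) (ε : ℝ) (π : Equiv.Perm (Fin n)) : Finset ℕ :=
  (Finset.range (n + 1)).filter (fun j => pathPoint π j ∈ Lmid n ε)

open Classical in
/-- `dens↓_k(x,A)`: the probability that a uniformly random `y ≼ x` with `‖x−y‖₁ = k`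
lies in `A` (if `k ≤ ‖x‖₁`, and `0` otherwise). -/
noncomputable def densDown {n : ℕ} (x : Fin n → Bool) (A : Finset (Fin n → Bool)) (k : ℕ) : ℝ :=
  if k ≤ wt x then
    ((A.filter (fun y => (∀ i, y i ≤ x i) ∧ hamm y x = k)).card : ℝ) / ((wt x).choose k : ℝ)
  else 0

open Classical in
/-- `dens↑_k(x,A)`: the probability that a uniformly random `y ≽ x` with `‖y−x‖₁ = k`
lies in `A` (if `k ≤ n − ‖x‖₁`, and `0` otherwise). -/
noncomputable def densUp {n : ℕ} (x : Fin n → Bool) (A : Finset (Fin n → Bool)) (k : ℕ) : ℝ :=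
  if k ≤ n - wt x then
    ((A.filter (fun y => (∀ i, x i ≤ y i) ∧ hamm x y = k)).card : ℝ) / ((n - wt x).choose k : ℝ)
  else 0

/-- `score↓(x,A) = Σ_{k=0}^n dens↓_k(x,A)`. -/
noncomputable def scoreDown {n : ℕ} (x : Fin n → Bool) (A : Finset (Fin n → Bool)) : ℝ :=
  ∑ k ∈ Finset.range (n + 1), densDown x A k

/-- `score↑(x,A) = Σ_{k=1}^n dens↑_k(x,A)`. -/
noncomputable def scoreUp {n : ℕ} (x : Fin n → Bool) (A : Finset (Fin n → Bool)) : ℝ :=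
  ∑ k ∈ Finset.Icc 1 n, densUp x A k

/-
Pick a uniformly random maximal chain of the cube and let `m` be the number of its points in `A`.
A point `x` lies on it with probability `1 / C(n, |x|)`, so `𝔼 m = ∑_{x ∈ A} 1 / C(n, |x|)`, and
points `y ≤ x` lie on it together with probability `1 / (C(n, |x|) C(|x|, |y|))`, which gives
`𝔼 m² ≤ 2 ∑_{x ∈ A} score↓(x, A) / C(n, |x|)`. Combining `(𝔼 m)² ≤ 𝔼 m²` with
`ε⁸ C(n, n/2) ≲ C(n, |x|)` on `L_mid` and `C(n, n/2) ≲ 2ⁿ / √n` bounds the average score from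
below. If `2d > n` or `d³ > n²`, then `n` is polylogarithmic in `1/ε` and `score↓ ≥ 1` suffices.
-/

open Equiv
open scoped Nat

section Cube

variable {n : ℕ}

lemma wt_le (x : Fin n → Bool) : wt x ≤ n :=
  (card_filter_le _ _).trans_eq (card_fin n)

lemma hamm_add_wt {x y : Fin n → Bool} (h : x ≤ y) : hamm x y + wt x = wt y := by
  simp only [hamm, wt, card_filter, ← sum_add_distrib]
  refine sum_congr rfl fun i _ => ?_
  have := h i
  revert this
  cases x i <;> cases y i <;> simp

lemma wt_mono {x y : Fin n → Bool} (h : x ≤ y) : wt x ≤ wt y :=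
  (Nat.le_add_left _ _).trans_eq (hamm_add_wt h)

lemma hamm_eq_wt_sub_wt {x y : Fin n → Bool} (h : x ≤ y) : hamm x y = wt y - wt x := by
  rw [← hamm_add_wt h, Nat.add_sub_cancel]

lemma card_filter_eq_false (y : Fin n → Bool) : #{i | y i = false} = n - wt y := by
  have := card_filter_add_card_filter_not (s := univ) (fun i => y i = true)
  simp only [Bool.not_eq_true, card_univ, Fintype.card_fin] at this
  rw [wt]
  omega

/-- The sizes of the four blocks `{a | (x a, y a) = p}` of a chain `x ≤ y` with weights
`j ≤ l`. -/
def chainBlockCard (n j l : ℕ) : Bool × Bool → ℕ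
  | (true, true) => j
  | (true, false) => 0
  | (false, true) => l - j
  | (false, false) => n - l

lemma card_chainBlock {x y : Fin n → Bool} (h : x ≤ y) (p : Bool × Bool) :
    #{a | (x a, y a) = p} = chainBlockCard n (wt x) (wt y) p := by
  obtain ⟨_ | _, _ | _⟩ := p <;> rw [chainBlockCard] <;>
    [rw [← card_filter_eq_false]; rw [← hamm_eq_wt_sub_wt h, hamm]; rw [← card_empty]; rw [wt]] <;>
  · congr 1
    ext a
    have := h a
    revert this
    simp only [mem_filter, mem_univ, true_and, Prod.mk.injEq, notMem_empty]
    cases x a <;> cases y a <;> simp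

lemma prod_factorial_chainBlockCard (n j l : ℕ) :
    ∏ p, (chainBlockCard n j l p)! = j ! * (l - j)! * (n - l)! := by
  simp only [Fintype.prod_prod_type, Fintype.prod_bool, chainBlockCard, Nat.factorial_zero,
    mul_one]
  ring

end Cube

section PermCount

variable {α κ : Type*} [Fintype α] [DecidableEq κ]

lemma exists_perm_comp_eq {g f : α → κ} (h : ∀ k, #{a | g a = k} = #{a | f a = k}) :
    ∃ π₀ : Perm α, g ∘ π₀ = f := by
  have e : ∀ k, {a // f a = k} ≃ {a // g a = k} := fun k =>
    Fintype.equivOfCardEq (by rw [Fintype.card_subtype, Fintype.card_subtype, h])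
  refine ⟨(sigmaFiberEquiv f).symm.trans ((sigmaCongrRight e).trans (sigmaFiberEquiv g)), ?_⟩
  funext a
  exact (e (f a) ⟨a, rfl⟩).2

/-- Permutations carrying `g` to `f` form a coset of the stabiliser of `g`. -/
lemma card_perm_comp_eq [DecidableEq α] [Fintype κ] {g f : α → κ}
    (h : ∀ k, #{a | g a = k} = #{a | f a = k}) :
    #{π : Perm α | g ∘ π = f} = ∏ k, (#{a | g a = k})! := by
  obtain ⟨π₀, hπ₀⟩ := exists_perm_comp_eq h
  have hcoset : ∀ τ : Perm α, g ∘ τ = g ↔ g ∘ ⇑(τ * π₀) = f := fun τ => by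
    rw [← hπ₀, Perm.coe_mul, ← Function.comp_assoc]
    exact (π₀.surjective.injective_comp_right).eq_iff.symm
  rw [← Fintype.card_subtype, ← Fintype.card_congr ((Equiv.mulRight π₀).subtypeEquiv hcoset),
    DomMulAct.stabilizer_card]
  simp only [Fintype.card_subtype]

end PermCount

section Chains

variable {n : ℕ}

lemma wt_comp_perm (x : Fin n → Bool) (π : Perm (Fin n)) : wt (x ∘ π) = wt x := by
  simp only [wt, card_filter]
  exact Fintype.sum_equiv π _ _ fun _ => rfl

lemma pathPoint_comp_self (π : Perm (Fin n)) (j : ℕ) :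
    pathPoint π j ∘ π = pathPoint (Equiv.refl _) j := by
  funext a
  simp only [pathPoint, Function.comp_apply, Equiv.symm_apply_apply]
  rfl

lemma pathPoint_eq_iff (π : Perm (Fin n)) (j : ℕ) (x : Fin n → Bool) :
    pathPoint π j = x ↔ x ∘ π = pathPoint (Equiv.refl _) j := by
  rw [← pathPoint_comp_self, eq_comm]
  exact (π.surjective.injective_comp_right).eq_iff.symm

lemma wt_pathPoint (π : Perm (Fin n)) {j : ℕ} (hj : j ≤ n) : wt (pathPoint π j) = j := by
  rw [← wt_comp_perm _ π, pathPoint_comp_self, wt]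
  convert Fin.card_filter_val_lt.trans (min_eq_right hj) using 3
  exact decide_eq_true_iff

lemma pathPoint_mono (π : Perm (Fin n)) {j l : ℕ} (h : j ≤ l) : pathPoint π j ≤ pathPoint π l :=
  fun i => by simpa [pathPoint, Bool.le_iff_imp] using fun h' => h'.trans_le h

/-- The number of maximal chains of the cube `{0,1}^n` passing through `x` and `y`
(zero unless `x ≤ y`). -/
def maxChainCount (x y : Fin n → Bool) : ℕ :=
  if ∀ i, x i ≤ y i then (wt x)! * (wt y - wt x)! * (n - wt y)! else 0

lemma maxChainCount_of_le {x y : Fin n → Bool} (h : x ≤ y) :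
    maxChainCount x y = (wt x)! * (wt y - wt x)! * (n - wt y)! :=
  if_pos h

lemma card_perm_pathPoint_pair {x y : Fin n → Bool} (h : x ≤ y) :
    #{π : Perm (Fin n) | pathPoint π (wt x) = x ∧ pathPoint π (wt y) = y} = maxChainCount x y := by
  set e := pathPoint (Equiv.refl (Fin n)) (wt x)
  set e' := pathPoint (Equiv.refl (Fin n)) (wt y)
  have hpair : ∀ π : Perm (Fin n), (pathPoint π (wt x) = x ∧ pathPoint π (wt y) = y) ↔
      (fun a => (x a, y a)) ∘ π = fun a => (e a, e' a) := fun π => by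
    rw [pathPoint_eq_iff, pathPoint_eq_iff]
    simp only [funext_iff, Function.comp_apply, Prod.mk.injEq, e, e']
    exact forall_and.symm
  have hblocks : ∀ p, #{a | (x a, y a) = p} = #{a | (e a, e' a) = p} := fun p => by
    rw [card_chainBlock h, card_chainBlock (pathPoint_mono (Equiv.refl _) (wt_mono h)),
      wt_pathPoint (Equiv.refl _) (wt_le x), wt_pathPoint (Equiv.refl _) (wt_le y)]
  rw [filter_congr fun π _ => hpair π, card_perm_comp_eq hblocks, maxChainCount_of_le h]
  simp only [card_chainBlock h, prod_factorial_chainBlockCard]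

lemma card_perm_pathPoint_pair_le (x y : Fin n → Bool) :
    #{π : Perm (Fin n) | pathPoint π (wt x) = x ∧ pathPoint π (wt y) = y}
      ≤ maxChainCount x y + maxChainCount y x := by
  by_cases hxy : x ≤ y
  · exact (card_perm_pathPoint_pair hxy).trans_le (Nat.le_add_right _ _)
  by_cases hyx : y ≤ x
  · simp_rw [and_comm (a := pathPoint _ (wt x) = x)]
    exact (card_perm_pathPoint_pair hyx).trans_le (Nat.le_add_left _ _)
  · rw [card_eq_zero.mpr (filter_eq_empty_iff.mpr ?_)]
    · exact Nat.zero_le _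
    rintro π - ⟨hx, hy⟩
    rcases le_total (wt x) (wt y) with h | h
    · exact hxy (hx ▸ hy ▸ pathPoint_mono π h)
    · exact hyx (hx ▸ hy ▸ pathPoint_mono π h)

lemma card_perm_pathPoint (x : Fin n → Bool) :
    #{π : Perm (Fin n) | pathPoint π (wt x) = x} = (wt x)! * (n - wt x)! := by
  simpa [maxChainCount_of_le le_rfl] using card_perm_pathPoint_pair (le_refl x)

end Chains

section ChainHits

variable {n : ℕ}

/-- The number of points of `A` on the maximal chain `pathPoint π 0 ≤ ⋯ ≤ pathPoint π n`. -/
def chainHits (A : Finset (Fin n → Bool)) (π : Perm (Fin n)) : ℕ :=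
  #{x ∈ A | pathPoint π (wt x) = x}

lemma sum_chainHits (A : Finset (Fin n → Bool)) :
    ∑ π, chainHits A π = ∑ x ∈ A, (wt x)! * (n - wt x)! := by
  simp only [chainHits, card_filter]
  rw [sum_comm]
  exact sum_congr rfl fun x _ => by rw [← card_perm_pathPoint x, card_filter]

lemma sum_chainHits_sq_le (A : Finset (Fin n → Bool)) :
    ∑ π, chainHits A π ^ 2 ≤ 2 * ∑ x ∈ A, ∑ y ∈ A, maxChainCount y x := by
  calc ∑ π, chainHits A π ^ 2
      = ∑ x ∈ A, ∑ y ∈ A,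
          #{π : Perm (Fin n) | pathPoint π (wt x) = x ∧ pathPoint π (wt y) = y} := by
        simp only [chainHits, card_filter, sq, sum_mul_sum, ite_zero_mul_ite_zero, mul_one]
        rw [sum_comm]
        exact sum_congr rfl fun x _ => sum_comm
    _ ≤ ∑ x ∈ A, ∑ y ∈ A, (maxChainCount x y + maxChainCount y x) :=
        sum_le_sum fun x _ => sum_le_sum fun y _ => card_perm_pathPoint_pair_le x y
    _ = 2 * ∑ x ∈ A, ∑ y ∈ A, maxChainCount y x := by
        simp only [sum_add_distrib]
        rw [sum_comm]
        ring

lemma scoreDown_mul_factorial (x : Fin n → Bool) (A : Finset (Fin n → Bool)) :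
    scoreDown x A * ((wt x)! * (n - wt x)! : ℝ) = ∑ y ∈ A, (maxChainCount y x : ℝ) := by
  classical
  have hrange : ∀ y ∈ A.filter (fun y => ∀ i, y i ≤ x i), hamm y x ∈ range (n + 1) := fun y _ =>
    mem_range.mpr (Nat.lt_succ_of_le ((card_filter_le _ _).trans_eq (card_fin n)))
  unfold maxChainCount
  push_cast
  rw [← sum_filter, ← sum_fiberwise_of_maps_to hrange, scoreDown, sum_mul]
  refine sum_congr rfl fun k _ => ?_
  rw [filter_filter]
  have hblock : ∀ y ∈ A.filter (fun y => (∀ i, y i ≤ x i) ∧ hamm y x = k),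
      ((wt y)! * (wt x - wt y)! * (n - wt x)! : ℝ) = (wt x - k)! * k ! * (n - wt x)! := by
    intro y hy
    obtain ⟨hyx, rfl⟩ := (mem_filter.mp hy).2
    rw [hamm_eq_wt_sub_wt hyx, Nat.sub_sub_self (wt_mono hyx)]
  rw [sum_congr rfl hblock, sum_const, nsmul_eq_mul, densDown]
  split_ifs with hk
  · rw [← Nat.choose_mul_factorial_mul_factorial hk]
    have : ((wt x).choose k : ℝ) ≠ 0 := by exact_mod_cast (Nat.choose_pos hk).ne'
    push_cast
    field_simp
  · have hempty : A.filter (fun y => (∀ i, y i ≤ x i) ∧ hamm y x = k) = ∅ :=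
      filter_eq_empty_iff.mpr fun y _ ⟨hyx, hy⟩ =>
        hk (hy ▸ (hamm_eq_wt_sub_wt hyx).symm ▸ Nat.sub_le _ _)
    simp [hempty]

lemma sq_sum_factorial_le (A : Finset (Fin n → Bool)) :
    (∑ x ∈ A, ((wt x)! * (n - wt x)! : ℝ)) ^ 2
      ≤ 2 * n ! * ∑ x ∈ A, scoreDown x A * ((wt x)! * (n - wt x)! : ℝ) := by
  have hCS := sq_sum_le_card_mul_sum_sq (s := univ)
    (f := fun π : Perm (Fin n) => (chainHits A π : ℝ))
  rw [card_univ, Fintype.card_perm, Fintype.card_fin] at hCS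
  have hsq : ∑ π, (chainHits A π : ℝ) ^ 2 ≤ 2 * ∑ x ∈ A, ∑ y ∈ A, (maxChainCount y x : ℝ) := by
    exact_mod_cast sum_chainHits_sq_le A
  calc (∑ x ∈ A, ((wt x)! * (n - wt x)! : ℝ)) ^ 2 = (∑ π, (chainHits A π : ℝ)) ^ 2 := by
        exact_mod_cast congrArg (· ^ 2) (sum_chainHits A).symm
    _ ≤ n ! * (2 * ∑ x ∈ A, ∑ y ∈ A, (maxChainCount y x : ℝ)) := by
        refine hCS.trans ?_
        gcongr
    _ = 2 * n ! * ∑ x ∈ A, scoreDown x A * ((wt x)! * (n - wt x)! : ℝ) := by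
        simp only [scoreDown_mul_factorial]
        ring

end ChainHits

section ScoreBounds

variable {n : ℕ}

lemma densDown_nonneg (x : Fin n → Bool) (A : Finset (Fin n → Bool)) (k : ℕ) :
    0 ≤ densDown x A k := by
  unfold densDown
  split_ifs <;> positivity

lemma scoreDown_nonneg (x : Fin n → Bool) (A : Finset (Fin n → Bool)) : 0 ≤ scoreDown x A :=
  sum_nonneg fun k _ => densDown_nonneg x A k

lemma one_le_scoreDown {x : Fin n → Bool} {A : Finset (Fin n → Bool)} (hx : x ∈ A) :
    1 ≤ scoreDown x A := by
  classical
  have hx0 : x ∈ A.filter (fun y => (∀ i, y i ≤ x i) ∧ hamm y x = 0) :=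
    mem_filter.mpr ⟨hx, fun _ => le_rfl, by simp [hamm]⟩
  have h0 : 1 ≤ densDown x A 0 := by
    rw [densDown, if_pos (Nat.zero_le _), Nat.choose_zero_right, Nat.cast_one, div_one]
    exact_mod_cast card_pos.mpr ⟨x, hx0⟩
  exact h0.trans (single_le_sum (fun k _ => densDown_nonneg x A k) (by simp))

lemma inv_choose_wt_eq (x : Fin n → Bool) :
    ((n.choose (wt x) : ℝ))⁻¹ = (wt x)! * (n - wt x)! / n ! := by
  rw [← Nat.choose_mul_factorial_mul_factorial (wt_le x)]
  have : (n.choose (wt x) : ℝ) ≠ 0 := by exact_mod_cast (Nat.choose_pos (wt_le x)).ne'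
  push_cast
  field_simp

theorem sq_sum_inv_choose_le (A : Finset (Fin n → Bool)) :
    (∑ x ∈ A, ((n.choose (wt x) : ℝ))⁻¹) ^ 2 ≤ 2 * ∑ x ∈ A, scoreDown x A / n.choose (wt x) := by
  have hF : (0 : ℝ) < n ! := by positivity
  simp only [div_eq_mul_inv (scoreDown _ _), inv_choose_wt_eq, ← sum_div, mul_div_assoc',
    div_pow]
  rw [div_le_div_iff₀ (by positivity) hF]
  calc (∑ x ∈ A, ((wt x)! * (n - wt x)! : ℝ)) ^ 2 * n !
      ≤ 2 * n ! * (∑ x ∈ A, scoreDown x A * ((wt x)! * (n - wt x)! : ℝ)) * n ! := by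
        gcongr
        exact sq_sum_factorial_le A
    _ = _ := by ring

theorem card_sq_mul_le_sum_scoreDown (A : Finset (Fin n → Bool)) {c : ℝ} (hc : 0 < c)
    (hA : ∀ x ∈ A, c ≤ n.choose (wt x)) :
    (#A : ℝ) ^ 2 * c ≤ 2 * (n.choose (n / 2) : ℝ) ^ 2 * ∑ x ∈ A, scoreDown x A := by
  have hB : (0 : ℝ) < n.choose (n / 2) := by exact_mod_cast Nat.choose_pos (Nat.div_le_self n 2)
  have hinv : (#A : ℝ) * ((n.choose (n / 2) : ℝ))⁻¹ ≤ ∑ x ∈ A, ((n.choose (wt x) : ℝ))⁻¹ := by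
    rw [← nsmul_eq_mul]
    refine card_nsmul_le_sum _ _ _ fun x _ => inv_anti₀ ?_ ?_
    · exact_mod_cast Nat.choose_pos (wt_le x)
    · exact_mod_cast Nat.choose_le_middle (wt x) n
  have hscore : ∑ x ∈ A, scoreDown x A / n.choose (wt x) ≤ (∑ x ∈ A, scoreDown x A) / c := by
    rw [sum_div]
    exact sum_le_sum fun x hx => div_le_div_of_nonneg_left (scoreDown_nonneg x A) hc (hA x hx)
  have key := (pow_le_pow_left₀ (by positivity) hinv 2).trans
    ((sq_sum_inv_choose_le A).trans (mul_le_mul_of_nonneg_left hscore zero_le_two))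
  rw [mul_pow, inv_pow, ← div_eq_mul_inv, mul_div_assoc', div_le_div_iff₀ (by positivity) hc]
    at key
  linarith

end ScoreBounds

section Binomial

lemma succ_mul_centralBinom_sq_le (m : ℕ) : (m + 1) * m.centralBinom ^ 2 ≤ 16 ^ m := by
  induction m with
  | zero => simp
  | succ m ih =>
    have hpoly : 4 * (m + 2) * (2 * m + 1) ^ 2 ≤ 16 * (m + 1) ^ 3 := by nlinarith
    refine Nat.le_of_mul_le_mul_left (c := (m + 1) ^ 2) ?_ (by positivity)
    calc (m + 1) ^ 2 * ((m + 1 + 1) * (m + 1).centralBinom ^ 2)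
        = (m + 2) * ((m + 1) * (m + 1).centralBinom) ^ 2 := by ring
      _ = 4 * (m + 2) * (2 * m + 1) ^ 2 * m.centralBinom ^ 2 := by
        rw [Nat.succ_mul_centralBinom_succ]; ring
      _ ≤ 16 * (m + 1) ^ 3 * m.centralBinom ^ 2 := by gcongr
      _ = 16 * (m + 1) ^ 2 * ((m + 1) * m.centralBinom ^ 2) := by ring
      _ ≤ 16 * (m + 1) ^ 2 * 16 ^ m := by gcongr
      _ = (m + 1) ^ 2 * 16 ^ (m + 1) := by ring

lemma choose_half_sq_mul_le (n : ℕ) : n.choose (n / 2) ^ 2 * n ≤ 8 * 4 ^ n := by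
  set m := (n + 1) / 2
  have hC : n.choose (n / 2) ≤ m.centralBinom :=
    (Nat.choose_le_choose _ (by omega : n ≤ 2 * m)).trans (Nat.choose_le_centralBinom _ _)
  calc n.choose (n / 2) ^ 2 * n ≤ m.centralBinom ^ 2 * (2 * (m + 1)) := by gcongr; omega
    _ = 2 * ((m + 1) * m.centralBinom ^ 2) := by ring
    _ ≤ 2 * 16 ^ m := by gcongr; exact succ_mul_centralBinom_sq_le m
    _ = 2 * 4 ^ (2 * m) := by rw [pow_mul]; norm_num
    _ ≤ 2 * 4 ^ (n + 1) := by gcongr <;> omega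
    _ = 8 * 4 ^ n := by ring

lemma choose_half_mul_sqrt_le (n : ℕ) : (n.choose (n / 2) : ℝ) * √n ≤ 3 * 2 ^ n := by
  rw [← pow_le_pow_iff_left₀ (by positivity) (by positivity) two_ne_zero, mul_pow,
    Real.sq_sqrt n.cast_nonneg]
  have : ((n.choose (n / 2) ^ 2 * n : ℕ) : ℝ) ≤ (8 * 4 ^ n : ℕ) := by
    exact_mod_cast choose_half_sq_mul_le n
  push_cast at this
  calc (n.choose (n / 2) : ℝ) ^ 2 * n ≤ 8 * 4 ^ n := this
    _ ≤ 9 * 4 ^ n := by gcongr; norm_num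
    _ = (3 * 2 ^ n) ^ 2 := by rw [mul_pow, ← pow_mul, mul_comm n, pow_mul]; norm_num

lemma choose_succ_mul_le {n w k : ℕ} (hk : w ≤ k) :
    n.choose (k + 1) * (w + 1) ≤ n.choose k * (n - w) :=
  calc n.choose (k + 1) * (w + 1) ≤ n.choose (k + 1) * (k + 1) := by gcongr
    _ = n.choose k * (n - k) := Nat.choose_succ_right_eq n k
    _ ≤ n.choose k * (n - w) := by gcongr

lemma choose_add_le_choose_mul_pow (n w s : ℕ) :
    (n.choose (w + s) : ℝ) ≤ n.choose w * (((n - w : ℕ) : ℝ) / (w + 1)) ^ s := by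
  induction s with
  | zero => simp
  | succ s ih =>
    have hstep : (n.choose (w + s + 1) : ℝ) ≤ n.choose (w + s) * (((n - w : ℕ) : ℝ) / (w + 1)) := by
      rw [mul_div_assoc', le_div_iff₀ (by positivity)]
      exact_mod_cast choose_succ_mul_le (Nat.le_add_right w s)
    calc (n.choose (w + (s + 1)) : ℝ) ≤ n.choose (w + s) * (((n - w : ℕ) : ℝ) / (w + 1)) := hstep
      _ ≤ _ := by rw [pow_succ, ← mul_assoc]; gcongr

/-- Each of the at most `d/2` steps from `w` up to `n/2` multiplies the binomial coefficient by
at most `(n + d)/(n - d) ≤ exp(2d/(n - d))`. -/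
lemma choose_half_le_choose_mul_exp {n d w : ℕ} (hdn : d < n) (hw : n ≤ 2 * w + d)
    (hw' : w ≤ n / 2) :
    (n.choose (n / 2) : ℝ) ≤ n.choose w * Real.exp ((d : ℝ) ^ 2 / (n - d)) := by
  set s := n / 2 - w
  have hnd : (0 : ℝ) < n - d := by rw [sub_pos]; exact_mod_cast hdn
  have hs : 2 * (s : ℝ) ≤ d := by exact_mod_cast (by omega : 2 * s ≤ d)
  have hq : ((n - w : ℕ) : ℝ) / (w + 1) ≤ 1 + 2 * d / (n - d) := by
    have h1 : 2 * ((n - w : ℕ) : ℝ) ≤ n + d := by exact_mod_cast (by omega : 2 * (n - w) ≤ n + d)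
    have h2 : (n : ℝ) - d ≤ 2 * (w + 1) := by
      have : (n : ℝ) ≤ 2 * w + d := by exact_mod_cast hw
      linarith
    rw [div_le_iff₀ (by positivity), one_add_div hnd.ne', div_mul_eq_mul_div, le_div_iff₀ hnd]
    nlinarith
  calc (n.choose (n / 2) : ℝ) = n.choose (w + s) := by rw [Nat.add_sub_cancel' hw']
    _ ≤ n.choose w * (((n - w : ℕ) : ℝ) / (w + 1)) ^ s := choose_add_le_choose_mul_pow n w s
    _ ≤ n.choose w * Real.exp (2 * d / (n - d)) ^ s := by
        gcongr
        exact hq.trans (by linarith [Real.add_one_le_exp (2 * d / (n - d))])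
    _ ≤ n.choose w * Real.exp ((d : ℝ) ^ 2 / (n - d)) := by
        rw [← Real.exp_nat_mul]
        gcongr
        rw [mul_div_assoc']
        exact div_le_div_of_nonneg_right (by nlinarith [(Nat.cast_nonneg d : (0 : ℝ) ≤ d)]) hnd.le

end Binomial

section Parameters

variable {n : ℕ} {ε : ℝ}

lemma one_le_log_hundred_div (hε : 0 < ε) (hε2 : ε ≤ 1 / 2) : 1 ≤ Real.log (100 / ε) := by
  rw [Real.le_log_iff_exp_le (by positivity)]
  have : (200 : ℝ) ≤ 100 / ε := by rw [le_div_iff₀ hε]; linarith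
  linarith [Real.exp_one_lt_d9]

lemma log_hundred_div_le (hε : 0 < ε) : Real.log (100 / ε) ≤ 100 / ε := by
  linarith [Real.log_le_sub_one_of_pos (show 0 < 100 / ε by positivity)]

lemma dPar_le (n : ℕ) (ε : ℝ) : (dPar n ε : ℝ) ≤ 2 * √(2 * n * Real.log (100 / ε)) + 2 := by
  rw [dPar]
  push_cast
  linarith [Nat.ceil_lt_add_one (Real.sqrt_nonneg (2 * n * Real.log (100 / ε)))]

lemma mem_Lmid_iff {x : Fin n → Bool} :
    x ∈ Lmid n ε ↔ n ≤ 2 * wt x + dPar n ε ∧ 2 * wt x ≤ n + dPar n ε := by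
  simp only [Lmid, mem_filter, mem_univ, true_and, div_le_iff₀ (two_pos (α := ℝ)),
    le_div_iff₀ (two_pos (α := ℝ)), ← Nat.cast_le (α := ℝ), Nat.cast_add, Nat.cast_mul,
    Nat.cast_ofNat]
  constructor <;> rintro ⟨h1, h2⟩ <;> constructor <;> linarith

lemma dPar_sq_le (hn : 1 ≤ n) (hεn : 1 / (n : ℝ) ≤ ε) (hε2 : ε ≤ 1 / 2) :
    (dPar n ε : ℝ) ^ 2 ≤ n * (8 * Real.log (100 / ε) + 124) := by
  have hn0 : (1 : ℝ) ≤ n := by exact_mod_cast hn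
  have hε : 0 < ε := (by positivity : (0 : ℝ) < 1 / n).trans_le hεn
  set L := Real.log (100 / ε)
  set r := √(2 * n * L)
  have hL1 : 1 ≤ L := one_le_log_hundred_div hε hε2
  have hr2 : r ^ 2 = 2 * n * L := Real.sq_sqrt (by positivity)
  have hLn : L ≤ 100 * n := by
    refine (log_hundred_div_le hε).trans ?_
    rw [div_le_iff₀ hε]
    rw [div_le_iff₀ (by positivity)] at hεn
    linarith
  have hr : r ≤ 15 * n := by
    rw [← Real.sqrt_sq (by positivity : (0 : ℝ) ≤ 15 * n)]
    exact Real.sqrt_le_sqrt (by nlinarith)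
  have hd := dPar_le n ε
  nlinarith [Real.sqrt_nonneg (2 * n * L), (by positivity : (0 : ℝ) ≤ dPar n ε)]

lemma le_of_dPar_large (hn : 1 ≤ n) (hε : 0 < ε) (hε2 : ε ≤ 1 / 2)
    (h : n < 2 * dPar n ε ∨ n ^ 2 < dPar n ε ^ 3) :
    (n : ℝ) ≤ 32768 * Real.log (100 / ε) ^ 3 := by
  have hn0 : (1 : ℝ) ≤ n := by exact_mod_cast hn
  set L := Real.log (100 / ε)
  set r := √(2 * n * L)
  have hL1 : 1 ≤ L := one_le_log_hundred_div hε hε2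
  have hr2 : r ^ 2 = 2 * n * L := Real.sq_sqrt (by positivity)
  have hr1 : 1 ≤ r := Real.one_le_sqrt.mpr (by nlinarith)
  have hd : (dPar n ε : ℝ) ≤ 4 * r := by linarith [dPar_le n ε]
  have hd0 : (0 : ℝ) ≤ dPar n ε := by positivity
  rcases h with h | h
  · have h' : (n : ℝ) < 2 * dPar n ε := by exact_mod_cast h
    have h8 : (n : ℝ) ^ 2 < (8 * r) ^ 2 := by gcongr; linarith
    have hsq : (n : ℝ) * n < n * (128 * L) := by nlinarith
    have hL3 : L ≤ L ^ 3 := le_self_pow₀ hL1 (by norm_num)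
    nlinarith [lt_of_mul_lt_mul_left hsq (by positivity)]
  · have h' : (n : ℝ) ^ 2 < dPar n ε ^ 3 := by exact_mod_cast h
    have hd6 : (dPar n ε : ℝ) ^ 6 ≤ 4096 * (2 * n * L) ^ 3 := by
      rw [← hr2]
      calc (dPar n ε : ℝ) ^ 6 ≤ (4 * r) ^ 6 := by gcongr
        _ = _ := by ring
    have h4 : (n : ℝ) ^ 3 * n ≤ n ^ 3 * (32768 * L ^ 3) := by nlinarith
    exact le_of_mul_le_mul_left h4 (by positivity)

lemma dPar_sq_div_le (hn : 1 ≤ n) (hεn : 1 / (n : ℝ) ≤ ε) (hε2 : ε ≤ 1 / 2)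
    (h2d : 2 * dPar n ε ≤ n) (hd3 : dPar n ε ^ 3 ≤ n ^ 2) :
    (dPar n ε : ℝ) ^ 2 / (n - dPar n ε) ≤ 8 * Real.log (100 / ε) + 126 := by
  have hn0 : (0 : ℝ) < n := by exact_mod_cast hn
  have hnd : (n : ℝ) ≤ 2 * (n - dPar n ε) := by
    have : (2 * dPar n ε : ℝ) ≤ n := by exact_mod_cast h2d
    linarith
  have hd3' : (dPar n ε : ℝ) ^ 3 ≤ n ^ 2 := by exact_mod_cast hd3
  -- `d² / (n - d) = d² / n + d³ / (n (n - d))`, and the second term is at most `2`.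
  have hsq := mul_le_mul_of_nonneg_right (dPar_sq_le hn hεn hε2)
    (by linarith : (0 : ℝ) ≤ n - dPar n ε)
  have hcube : (dPar n ε : ℝ) ^ 3 ≤ 2 * n * (n - dPar n ε) := by nlinarith
  rw [div_le_iff₀ (by linarith)]
  refine le_of_mul_le_mul_left ?_ hn0
  nlinarith

end Parameters

section Estimates

variable {n : ℕ} {ε : ℝ}

lemma pow_eight_mul_choose_half_le (hn : 1 ≤ n) (hεn : 1 / (n : ℝ) ≤ ε) (hε2 : ε ≤ 1 / 2)
    (h2d : 2 * dPar n ε ≤ n) (hd3 : dPar n ε ^ 3 ≤ n ^ 2) {x : Fin n → Bool} (hx : x ∈ Lmid n ε) :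
    ε ^ 8 * n.choose (n / 2) ≤ 100 ^ 8 * Real.exp 126 * n.choose (wt x) := by
  have hε : 0 < ε := (by positivity : (0 : ℝ) < 1 / n).trans_le hεn
  obtain ⟨hx1, hx2⟩ := mem_Lmid_iff.mp hx
  have hwt := wt_le x
  set d := dPar n ε
  set L := Real.log (100 / ε)
  obtain ⟨w, hCw, hw1, hw2⟩ :
      ∃ w, n.choose w = n.choose (wt x) ∧ n ≤ 2 * w + d ∧ w ≤ n / 2 := by
    rcases le_or_gt (wt x) (n / 2) with h | h
    · exact ⟨wt x, rfl, hx1, h⟩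
    · exact ⟨n - wt x, Nat.choose_symm (wt_le x), by omega, by omega⟩
  have hexp := dPar_sq_div_le hn hεn hε2 h2d hd3
  have hexpL : Real.exp (8 * L + 126) = (100 / ε) ^ 8 * Real.exp 126 := by
    rw [Real.exp_add, show (8 : ℝ) * L = ((8 : ℕ) : ℝ) * L by norm_num, Real.exp_nat_mul,
      Real.exp_log (by positivity)]
  calc ε ^ 8 * n.choose (n / 2) ≤ ε ^ 8 * (n.choose w * Real.exp ((d : ℝ) ^ 2 / (n - d))) := by
        gcongr
        exact choose_half_le_choose_mul_exp (by omega) hw1 hw2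
    _ ≤ ε ^ 8 * (n.choose w * Real.exp (8 * L + 126)) := by gcongr
    _ = 100 ^ 8 * Real.exp 126 * n.choose (wt x) := by
        rw [hexpL, hCw]
        field_simp

lemma pow_eight_mul_sqrt_le_of_dPar_large (hn : 1 ≤ n) (hε : 0 < ε) (hε2 : ε ≤ 1 / 2)
    (h : n < 2 * dPar n ε ∨ n ^ 2 < dPar n ε ^ 3) :
    ε ^ 8 * √n ≤ 2 * 10 ^ 5 := by
  have hL := le_of_dPar_large hn hε hε2 h
  have hL0 : 0 ≤ Real.log (100 / ε) := by linarith [one_le_log_hundred_div hε hε2]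
  have hL3 : Real.log (100 / ε) ^ 3 ≤ (100 / ε) ^ 3 := by gcongr; exact log_hundred_div_le hε
  have hε13 : ε ^ 13 ≤ 1 := pow_le_one₀ hε.le (by linarith)
  rw [← pow_le_pow_iff_left₀ (by positivity) (by norm_num) two_ne_zero, mul_pow,
    Real.sq_sqrt n.cast_nonneg]
  calc (ε ^ 8) ^ 2 * n ≤ ε ^ 16 * (32768 * (100 / ε) ^ 3) := by
        rw [← pow_mul]
        gcongr
        exact hL.trans (by gcongr)
    _ = 32768 * 10 ^ 6 * ε ^ 13 := by field_simp; ring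
    _ ≤ (2 * 10 ^ 5) ^ 2 := by nlinarith

lemma one_le_avg_scoreDown {A : Finset (Fin n → Bool)} (hA : A.Nonempty) :
    1 ≤ (∑ x ∈ A, scoreDown x A) / #A := by
  rw [le_div_iff₀ (by exact_mod_cast hA.card_pos), one_mul, ← nsmul_one]
  exact card_nsmul_le_sum _ _ _ fun x hx => one_le_scoreDown hx

lemma pow_eight_mul_density_mul_sqrt_le_of_dPar_small (hn : 1 ≤ n) (hεn : 1 / (n : ℝ) ≤ ε)
    (hε2 : ε ≤ 1 / 2) (h2d : 2 * dPar n ε ≤ n) (hd3 : dPar n ε ^ 3 ≤ n ^ 2)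
    {A : Finset (Fin n → Bool)} (hA : A ⊆ Lmid n ε) (hne : A.Nonempty) :
    ε ^ 8 * (#A / 2 ^ n) * √n
      ≤ 6 * (100 ^ 8 * Real.exp 126) * ((∑ x ∈ A, scoreDown x A) / #A) := by
  have hε : 0 < ε := (by positivity : (0 : ℝ) < 1 / n).trans_le hεn
  have ha : (0 : ℝ) < #A := by exact_mod_cast hne.card_pos
  have hB : (0 : ℝ) < n.choose (n / 2) := by exact_mod_cast Nat.choose_pos (Nat.div_le_self n 2)
  set K := 100 ^ 8 * Real.exp 126
  set S := ∑ x ∈ A, scoreDown x A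
  have key := card_sq_mul_le_sum_scoreDown A (c := ε ^ 8 * n.choose (n / 2) / K)
    (by positivity) fun x hx => by
      rw [div_le_iff₀ (by positivity), mul_comm _ K]
      exact pow_eight_mul_choose_half_le hn hεn hε2 h2d hd3 (hA hx)
  have hcancel : ε ^ 8 * #A ^ 2 ≤ 2 * K * n.choose (n / 2) * S := by
    rw [mul_div_assoc', div_le_iff₀ (by positivity)] at key
    refine le_of_mul_le_mul_left ?_ hB
    linarith
  have hmain : ε ^ 8 * #A ^ 2 * √n ≤ 6 * K * S * 2 ^ n := by
    have hS : 0 ≤ S := sum_nonneg fun x _ => scoreDown_nonneg x A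
    calc ε ^ 8 * #A ^ 2 * √n ≤ 2 * K * S * (n.choose (n / 2) * √n) := by
          nlinarith [Real.sqrt_nonneg n]
      _ ≤ 2 * K * S * (3 * 2 ^ n) :=
          mul_le_mul_of_nonneg_left (choose_half_mul_sqrt_le n) (by positivity)
      _ = _ := by ring
  calc ε ^ 8 * (#A / 2 ^ n) * √n = ε ^ 8 * #A ^ 2 * √n / (#A * 2 ^ n) := by field_simp
    _ ≤ 6 * K * S * 2 ^ n / (#A * 2 ^ n) := by gcongr
    _ = 6 * K * (S / #A) := by field_simp

theorem pow_eight_mul_density_mul_sqrt_le (hn : 1 ≤ n) (hεn : 1 / (n : ℝ) ≤ ε)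
    (hε2 : ε ≤ 1 / 2) {A : Finset (Fin n → Bool)} (hA : A ⊆ Lmid n ε) (hne : A.Nonempty) :
    ε ^ 8 * (#A / 2 ^ n) * √n
      ≤ 6 * (100 ^ 8 * Real.exp 126) * ((∑ x ∈ A, scoreDown x A) / #A) := by
  by_cases hsmall : 2 * dPar n ε ≤ n ∧ dPar n ε ^ 3 ≤ n ^ 2
  · exact pow_eight_mul_density_mul_sqrt_le_of_dPar_small hn hεn hε2 hsmall.1 hsmall.2 hA hne
  have hε : 0 < ε := (by positivity : (0 : ℝ) < 1 / n).trans_le hεn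
  have hlarge : n < 2 * dPar n ε ∨ n ^ 2 < dPar n ε ^ 3 := by
    rw [not_and_or] at hsmall
    omega
  have hdens : (#A : ℝ) / 2 ^ n ≤ 1 := by
    rw [div_le_one (by positivity)]
    exact_mod_cast (card_le_univ A).trans_eq (by simp)
  have hK : (2 * 10 ^ 5 : ℝ) ≤ 6 * (100 ^ 8 * Real.exp 126) := by
    nlinarith [Real.one_le_exp (by norm_num : (0 : ℝ) ≤ 126)]
  calc ε ^ 8 * (#A / 2 ^ n) * √n ≤ ε ^ 8 * √n := by
        nlinarith [mul_nonneg (pow_nonneg hε.le 8) (Real.sqrt_nonneg n)]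
    _ ≤ 6 * (100 ^ 8 * Real.exp 126) :=
        (pow_eight_mul_sqrt_le_of_dPar_large hn hε hε2 hlarge).trans hK
    _ ≤ 6 * (100 ^ 8 * Real.exp 126) * ((∑ x ∈ A, scoreDown x A) / #A) :=
        le_mul_of_one_le_right (by positivity) (one_le_avg_scoreDown hne)

end Estimates

theorem avg_down_score_lower_bound :
    ∃ c : ℝ, 0 < c ∧ ∀ n : ℕ, 1 ≤ n → ∀ ε : ℝ, 1 / (n : ℝ) ≤ ε → ε ≤ 1 / 2 →
      ∀ A : Finset (Fin n → Bool), A ⊆ Lmid n ε → A.Nonempty → ∀ σ : ℝ,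
        (A.card : ℝ) = σ * 2 ^ n →
        c * ε ^ 8 * σ * Real.sqrt n / Real.sqrt (Real.log (1 / ε)) ≤
          (∑ x ∈ A, scoreDown x A) / (A.card : ℝ) := by
  set K : ℝ := 6 * (100 ^ 8 * Real.exp 126)
  have hK : 0 < K := by positivity
  have hlog2 : 0 < √(Real.log 2) := Real.sqrt_pos.mpr (Real.log_pos one_lt_two)
  refine ⟨√(Real.log 2) / K, div_pos hlog2 hK, ?_⟩
  intro n hn ε hεn hε2 A hA hne σ hσ
  have hε : 0 < ε := (by positivity : (0 : ℝ) < 1 / n).trans_le hεn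
  rw [eq_comm, ← eq_div_iff (by positivity)] at hσ
  subst hσ
  have hlog : √(Real.log 2) ≤ √(Real.log (1 / ε)) :=
    Real.sqrt_le_sqrt (Real.log_le_log two_pos (by rw [le_div_iff₀ hε]; linarith))
  have hslack : √(Real.log 2) / √(Real.log (1 / ε)) ≤ 1 :=
    (div_le_one (hlog2.trans_le hlog)).mpr hlog
  have hbound : ε ^ 8 * (#A / 2 ^ n) * √n / K ≤ (∑ x ∈ A, scoreDown x A) / #A :=
    (div_le_iff₀ hK).mpr ((pow_eight_mul_density_mul_sqrt_le hn hεn hε2 hA hne).trans_eq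
      (mul_comm _ _))
  calc √(Real.log 2) / K * ε ^ 8 * (#A / 2 ^ n) * √n / √(Real.log (1 / ε))
      = √(Real.log 2) / √(Real.log (1 / ε)) * (ε ^ 8 * (#A / 2 ^ n) * √n / K) := by ring
    _ ≤ 1 * ((∑ x ∈ A, scoreDown x A) / #A) :=
        mul_le_mul hslack hbound (div_nonneg (by positivity) hK.le) zero_le_one
    _ = (∑ x ∈ A, scoreDown x A) / #A := one_mul _
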